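/- For the radius gadget (G,w): if F'(x,y)=1 then R_{G,w} ≤ max{2α, β} + n, and if F'(x,y)=0 then R_{G,w} ≥ min{α+β, 3α}. -/

import Mathlib

open scoped ENNReal

set_option linter.unusedVariables false

/-- The length of a walk with respect to `ℝ≥0∞` edge weights. -/
noncomputable def wlen {V : Type*} (G : SimpleGraph V) (w : V → V → ℝ≥0∞) {u v : V}
    (p : G.Walk u v) : ℝ≥0∞ :=
  (p.darts.map fun d => w d.toProd.1 d.toProd.2).sum

/-- The weighted distance: the infimum of walk lengths. -/
noncomputable def wdist {V : Type*} (G : SimpleGraph V) (w : V → V → ℝ≥0∞) (u v : V) : ℝ≥0∞ :=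
  ⨅ p : G.Walk u v, wlen G w p

/-- Eccentricity `e_{G,w}(u) = max_v d_{G,w}(u,v)`. -/
noncomputable def wecc {V : Type*} (G : SimpleGraph V) (w : V → V → ℝ≥0∞) (u : V) : ℝ≥0∞ :=
  ⨆ v, wdist G w u v

/-- Weighted radius `R_{G,w} = min_u e_{G,w}(u)`. -/
noncomputable def wrad {V : Type*} (G : SimpleGraph V) (w : V → V → ℝ≥0∞) : ℝ≥0∞ :=
  ⨅ u, wecc G w u

/-- Vertices of the radius gadget. -/
inductive RV (h s ℓ : ℕ) where
  /-- tree node `t_{i,j}` encoded in heap order: `t m` is the tree node numbered `m+1`,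
  i.e. the node of depth `i` and position `j` with `m + 1 = 2^i + (j-1)`. -/
  | t (m : Fin (2 ^ (h + 1) - 1))
  /-- path node `p_{i+1, j+1}` -/
  | p (i : Fin (2 * s + ℓ)) (j : Fin (2 ^ h))
  /-- the extra node `a_0` -/
  | a0
  /-- node `a_{i+1}` -/
  | a (i : Fin (2 ^ s))
  /-- node `b_{i+1}` -/
  | b (i : Fin (2 ^ s))
  /-- node `a^z_{j+1}` -/
  | ah (z : Bool) (j : Fin s)
  /-- node `b^z_{j+1}` -/
  | bh (z : Bool) (j : Fin s)
  /-- node `a*_{j+1}` -/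
  | as (j : Fin ℓ)
  /-- node `b*_{j+1}` -/
  | bs (j : Fin ℓ)
  deriving DecidableEq, Fintype

/-- Base (oriented) adjacency of the radius gadget.  Here `bin(i,j)` is realized as
`Nat.testBit` on the 0-based index. -/
def rgadgetAdj0 {h s ℓ : ℕ} : RV h s ℓ → RV h s ℓ → Prop
  | .t m, .t m' => 1 ≤ m.val ∧ m'.val + 1 = (m.val + 1) / 2
  | .t m, .p _ j => m.val + 1 = 2 ^ h + j.val
  | .p i j, .p i' j' => i = i' ∧ j.val = j'.val + 1
  | .ah z jj, .p i j => i.val = 2 * jj.val + (if z then 1 else 0) ∧ j.val = 0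
  | .bh z jj, .p i j => i.val = 2 * jj.val + (if z then 0 else 1) ∧ j.val = 2 ^ h - 1
  | .as jj, .p i j => i.val = 2 * s + jj.val ∧ j.val = 0
  | .bs jj, .p i j => i.val = 2 * s + jj.val ∧ j.val = 2 ^ h - 1
  | .a i, .ah z j => z = i.val.testBit j.val
  | .b i, .bh z j => z = i.val.testBit j.val
  | .a i, .a i' => i ≠ i'
  | .b i, .b i' => i ≠ i'
  | .a _, .as _ => True
  | .b _, .bs _ => True
  | .a0, .a _ => True
  | _, _ => False

/-- The radius gadget graph. -/
def rgadget (h s ℓ : ℕ) : SimpleGraph (RV h s ℓ) where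
  Adj u v := u ≠ v ∧ (rgadgetAdj0 u v ∨ rgadgetAdj0 v u)
  symm := ⟨fun u v huv => ⟨huv.1.symm, huv.2.symm⟩⟩
  loopless := ⟨fun u hu => hu.1 rfl⟩

/-- The weights of the radius gadget: tree edges, path edges and the attachment edges of
`a^z_j, b^z_j, a*_j, b*_j` to the paths have weight `1`; leaf–path edges,
`a_i`–`a^{bin(i,j)}_j`, `b_i`–`b^{bin(i,j)}_j` edges and clique edges have weight `α`;
`a_i`–`a*_j` has weight `α` if `x_{i,j}=1` and `β` otherwise, similarly `b_i`–`b*_j`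
according to `y`; and the edges `a_0`–`a_i` have weight `2α`. -/
def rgadgetW {h s ℓ : ℕ} (x y : Fin (2 ^ s) → Fin ℓ → Bool) (α β : ℕ) :
    RV h s ℓ → RV h s ℓ → ℕ
  | .a i, .as j => if x i j then α else β
  | .as j, .a i => if x i j then α else β
  | .b i, .bs j => if y i j then α else β
  | .bs j, .b i => if y i j then α else β
  | .a0, .a _ => 2 * α
  | .a _, .a0 => 2 * α
  | .t _, .p _ _ => α
  | .p _ _, .t _ => α
  | .a _, .ah _ _ => α
  | .ah _ _, .a _ => α
  | .b _, .bh _ _ => α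
  | .bh _ _, .b _ => α
  | .a _, .a _ => α
  | .b _, .b _ => α
  | _, _ => 1

/-!
If `x i j = y i j = 1`, every vertex is within `max (2α) β + n` of `a_i`: the rows are entered
from `a_i` through `a*_j` or through some `a^z_k` (at worst via one clique neighbour, cost `2α`),
the tree through the row of `a*_j`, and `b_{i'}` through the row of a bit in which `i` and `i'`
differ, or, for `i' = i`, through the row joining `a*_j` to `b*_j`, whose end edges both have
weight `α`.

For the lower bound, a potential that changes along every edge by at most the edge weight bounds
distances from below. The potential `3α` at `a_0`, `α` at the `a_i` and `0` elsewhere keeps every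
centre other than the `a_i` at distance `3α` from `a_0`, and `a_0` at distance `3α` from `b_1`.
For the centre `a_i`, a potential that is `α` on the rows `a_i` enters with cost `α` and
`min β (2α)` on the others forces `d(a_i, b_i) ≥ α + min β (2α)` once no `j` has
`x i j = y i j = 1`.
-/

open SimpleGraph

section WeightedDistance

variable {V : Type*} {G : SimpleGraph V} {w : V → V → ℝ≥0∞}

@[simp]
lemma wlen_nil {u : V} : wlen G w (Walk.nil : G.Walk u u) = 0 := by
  simp [wlen]

lemma wlen_cons {u v z : V} (huv : G.Adj u v) (p : G.Walk v z) :
    wlen G w (Walk.cons huv p) = w u v + wlen G w p := by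
  simp [wlen]

lemma wlen_append {u v z : V} (p : G.Walk u v) (q : G.Walk v z) :
    wlen G w (p.append q) = wlen G w p + wlen G w q := by
  simp [wlen, Walk.darts_append]

lemma wlen_reverse (hw : ∀ a b, w a b = w b a) {u v : V} (p : G.Walk u v) :
    wlen G w p.reverse = wlen G w p := by
  simp only [wlen, Walk.darts_reverse, List.map_reverse, List.sum_reverse, List.map_map]
  exact congrArg List.sum (List.map_congr_left fun d _ => hw _ _)

lemma wdist_le_wlen {u v : V} (p : G.Walk u v) : wdist G w u v ≤ wlen G w p :=
  iInf_le _ p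

@[simp]
lemma wdist_self (u : V) : wdist G w u u = 0 :=
  nonpos_iff_eq_zero.mp ((wdist_le_wlen Walk.nil).trans_eq wlen_nil)

lemma wdist_le_of_adj {u v : V} (huv : G.Adj u v) : wdist G w u v ≤ w u v := by
  simpa [wlen_cons] using wdist_le_wlen (w := w) (Walk.cons huv Walk.nil)

lemma wdist_triangle (u v z : V) : wdist G w u z ≤ wdist G w u v + wdist G w v z :=
  ENNReal.le_iInf_add_iInf fun p q => (wdist_le_wlen (p.append q)).trans_eq (wlen_append p q)

lemma wdist_le_natCast_add {u v z : V} {a b : ℕ} (huv : wdist G w u v ≤ a)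
    (hvz : wdist G w v z ≤ b) : wdist G w u z ≤ (a + b : ℕ) :=
  (wdist_triangle u v z).trans (by push_cast; exact add_le_add huv hvz)

lemma wdist_comm (hw : ∀ a b, w a b = w b a) (u v : V) : wdist G w u v = wdist G w v u := by
  have key : ∀ u v, wdist G w u v ≤ wdist G w v u := fun u v =>
    le_iInf fun p => (wdist_le_wlen p.reverse).trans_eq (wlen_reverse hw p)
  exact le_antisymm (key u v) (key v u)

lemma le_add_wdist_of_lipschitz (g : V → ℝ≥0∞) (hg : ∀ a b, G.Adj a b → g b ≤ g a + w a b)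
    (u v : V) : g v ≤ g u + wdist G w u v := by
  rw [wdist, ENNReal.add_iInf]
  refine le_iInf fun p => ?_
  induction p with
  | nil => simp
  | @cons a b c hab p ih =>
    calc g c ≤ g b + wlen G w p := ih
      _ ≤ g a + w a b + wlen G w p := by gcongr; exact hg a b hab
      _ = g a + wlen G w (Walk.cons hab p) := by rw [wlen_cons, add_assoc]

lemma wdist_le_wecc (u v : V) : wdist G w u v ≤ wecc G w u :=
  le_iSup (wdist G w u) v

lemma wrad_le_of_forall_wdist_le {c : ℝ≥0∞} (u : V) (hu : ∀ v, wdist G w u v ≤ c) :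
    wrad G w ≤ c :=
  (iInf_le _ u).trans (iSup_le hu)

end WeightedDistance

lemma Nat.exists_testBit_ne_of_lt_two_pow {a b k : ℕ} (ha : a < 2 ^ k) (hb : b < 2 ^ k)
    (hab : a ≠ b) : ∃ j < k, a.testBit j ≠ b.testBit j := by
  by_contra! hbits
  refine hab (Nat.eq_of_testBit_eq fun j => ?_)
  by_cases hj : j < k
  · exact hbits j hj
  · have hpow : 2 ^ k ≤ 2 ^ j := Nat.pow_le_pow_right two_pos (by omega)
    rw [Nat.testBit_lt_two_pow (ha.trans_le hpow), Nat.testBit_lt_two_pow (hb.trans_le hpow)]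

lemma RV.two_pow_succ_sub_one_add_two_pow_le_card {h s ℓ : ℕ} (r : Fin (2 * s + ℓ)) :
    2 ^ (h + 1) - 1 + 2 ^ h ≤ Fintype.card (RV h s ℓ) := by
  have hinj : Function.Injective (Sum.elim RV.t (RV.p r) : _ ⊕ Fin (2 ^ h) → RV h s ℓ) :=
    Function.Injective.sumElim (fun _ _ => RV.t.inj) (fun _ _ hk => (RV.p.inj hk).2)
      fun _ _ => by simp
  simpa using Fintype.card_le_of_injective _ hinj

section Gadget

variable {h s ℓ : ℕ} (x y : Fin (2 ^ s) → Fin ℓ → Bool) (α β : ℕ)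

abbrev rgadgetWeight (u v : RV h s ℓ) : ℝ≥0∞ := rgadgetW x y α β u v

local notation "δ" => wdist (rgadget h s ℓ) (rgadgetWeight x y α β)

lemma rgadgetW_comm (u v : RV h s ℓ) : rgadgetW x y α β u v = rgadgetW x y α β v u := by
  cases u <;> cases v <;> rfl

lemma rgadget_wdist_comm (u v : RV h s ℓ) : δ u v = δ v u :=
  wdist_comm (fun a b => by rw [rgadgetWeight, rgadgetW_comm]) u v

lemma rgadget_wdist_le_of_adj0 {u v : RV h s ℓ} (huv : rgadgetAdj0 u v) :
    δ u v ≤ (rgadgetW x y α β u v : ℕ) := by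
  by_cases he : u = v
  · subst he; simp
  · exact wdist_le_of_adj ⟨he, Or.inl huv⟩

lemma rgadget_wdist_le_of_adj0' {u v : RV h s ℓ} (huv : rgadgetAdj0 u v) :
    δ v u ≤ (rgadgetW x y α β u v : ℕ) :=
  rgadget_wdist_comm x y α β v u ▸ rgadget_wdist_le_of_adj0 x y α β huv

lemma rgadget_wdist_row_le (r : Fin (2 * s + ℓ)) (k : ℕ) (hk : k < 2 ^ h) :
    δ (.p r ⟨0, Nat.two_pow_pos h⟩) (.p r ⟨k, hk⟩) ≤ k := by
  induction k with
  | zero => simp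
  | succ k ih =>
    exact wdist_le_natCast_add (ih (by omega))
      (rgadget_wdist_le_of_adj0' x y α β (u := .p r ⟨k + 1, hk⟩) ⟨rfl, rfl⟩)

lemma rgadget_wdist_tree_root_le (m : ℕ) (hm : m < 2 ^ (h + 1) - 1) :
    δ (.t ⟨m, hm⟩) (.t ⟨0, by omega⟩) ≤ m := by
  induction m using Nat.strong_induction_on with
  | _ m ih =>
    rcases m with _ | m
    · simp
    · have hparent : (m + 2) / 2 - 1 < m + 1 := by omega
      have hedge := rgadget_wdist_le_of_adj0 x y α β (u := .t ⟨m + 1, hm⟩)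
        (v := .t ⟨(m + 2) / 2 - 1, by omega⟩) ⟨by simp, by simp; omega⟩
      exact (wdist_le_natCast_add hedge (ih _ hparent _)).trans
        (Nat.cast_le.mpr (by show 1 + _ ≤ _; omega))

lemma rgadget_wdist_ah_bh_le (z : Bool) (j : Fin s) :
    δ (.ah z j) (.bh (!z) j) ≤ (2 ^ h + 1 : ℕ) := by
  have hr : 2 * j.val + (if z then 1 else 0) < 2 * s + ℓ := by have := j.isLt; split <;> omega
  have hlast : 2 ^ h - 1 < 2 ^ h := Nat.sub_one_lt (Nat.two_pow_pos h).ne'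
  have hstart := rgadget_wdist_le_of_adj0 x y α β (u := .ah z j)
    (v := .p ⟨_, hr⟩ ⟨0, Nat.two_pow_pos h⟩) ⟨rfl, rfl⟩
  have hend := rgadget_wdist_le_of_adj0' x y α β (u := .bh (!z) j)
    (v := .p ⟨_, hr⟩ ⟨2 ^ h - 1, hlast⟩) ⟨by cases z <;> rfl, rfl⟩
  refine (wdist_le_natCast_add (wdist_le_natCast_add hstart
    (rgadget_wdist_row_le x y α β _ _ hlast)) hend).trans (Nat.cast_le.mpr ?_)
  show 1 + (2 ^ h - 1) + 1 ≤ _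
  have := Nat.two_pow_pos h
  omega

lemma rgadget_wdist_as_bs_le (j : Fin ℓ) : δ (.as j) (.bs j) ≤ (2 ^ h + 1 : ℕ) := by
  have hr : 2 * s + j.val < 2 * s + ℓ := by have := j.isLt; omega
  have hlast : 2 ^ h - 1 < 2 ^ h := Nat.sub_one_lt (Nat.two_pow_pos h).ne'
  have hstart := rgadget_wdist_le_of_adj0 x y α β (u := .as j)
    (v := .p ⟨_, hr⟩ ⟨0, Nat.two_pow_pos h⟩) ⟨rfl, rfl⟩
  have hend := rgadget_wdist_le_of_adj0' x y α β (u := .bs j)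
    (v := .p ⟨_, hr⟩ ⟨2 ^ h - 1, hlast⟩) ⟨rfl, rfl⟩
  refine (wdist_le_natCast_add (wdist_le_natCast_add hstart
    (rgadget_wdist_row_le x y α β _ _ hlast)) hend).trans (Nat.cast_le.mpr ?_)
  show 1 + (2 ^ h - 1) + 1 ≤ _
  have := Nat.two_pow_pos h
  omega

lemma rgadget_wdist_as_t_le (j : Fin ℓ) (m : Fin (2 ^ (h + 1) - 1)) :
    δ (.as j) (.t m) ≤ (α + 2 ^ h + m : ℕ) := by
  have hr : 2 * s + j.val < 2 * s + ℓ := by have := j.isLt; omega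
  have hleaf : 2 ^ h - 1 < 2 ^ (h + 1) - 1 := by rw [pow_succ]; have := Nat.two_pow_pos h; omega
  have hstart := rgadget_wdist_le_of_adj0 x y α β (u := .as j)
    (v := .p ⟨_, hr⟩ ⟨0, Nat.two_pow_pos h⟩) ⟨rfl, rfl⟩
  have hleafEdge := rgadget_wdist_le_of_adj0' x y α β (u := .t ⟨2 ^ h - 1, hleaf⟩)
    (v := .p ⟨_, hr⟩ ⟨0, Nat.two_pow_pos h⟩)
    (by show 2 ^ h - 1 + 1 = 2 ^ h + 0; have := Nat.two_pow_pos h; omega)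
  have hdown := rgadget_wdist_comm x y α β (.t m) _ ▸
    rgadget_wdist_tree_root_le x y α β m m.isLt
  refine (wdist_le_natCast_add (wdist_le_natCast_add (wdist_le_natCast_add hstart hleafEdge)
    (rgadget_wdist_tree_root_le x y α β _ hleaf)) hdown).trans (Nat.cast_le.mpr ?_)
  show 1 + α + (2 ^ h - 1) + m ≤ _
  have := Nat.two_pow_pos h
  omega

lemma rgadget_wdist_a_ah_le (i : Fin (2 ^ s)) (z : Bool) (j : Fin s) :
    δ (.a i) (.ah z j) ≤ (2 * α : ℕ) := by
  by_cases hz : z = i.val.testBit j.val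
  · exact (rgadget_wdist_le_of_adj0 x y α β (u := .a i) (v := .ah z j) hz).trans
      (Nat.cast_le.mpr (by show α ≤ 2 * α; omega))
  · -- flipping bit `j` of `i` gives a clique neighbour of `a i` adjacent to `ah z j`
    have hflip : i.val ^^^ 2 ^ j.val < 2 ^ s :=
      Nat.xor_lt_two_pow i.isLt (Nat.pow_lt_pow_right one_lt_two j.isLt)
    have hbit : z = (i.val ^^^ 2 ^ j.val).testBit j.val := by
      rw [Nat.testBit_xor, Nat.testBit_two_pow_self]
      cases z <;> simp_all
    have hne : i ≠ ⟨_, hflip⟩ := fun he => hz (by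
      have hval : i.val = i.val ^^^ 2 ^ j.val := congrArg Fin.val he
      rw [hbit, ← hval])
    refine (wdist_le_natCast_add
      (rgadget_wdist_le_of_adj0 x y α β (u := .a i) (v := .a ⟨_, hflip⟩) hne)
      (rgadget_wdist_le_of_adj0 x y α β (v := .ah z j) hbit)).trans
      (Nat.cast_le.mpr (by show α + α ≤ 2 * α; omega))

lemma rgadget_wdist_a_p_le (i : Fin (2 ^ s)) (r : Fin (2 * s + ℓ)) (k : Fin (2 ^ h)) :
    δ (.a i) (.p r k) ≤ (max (2 * α) β + 1 + k : ℕ) := by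
  suffices hstart : δ (.a i) (.p r ⟨0, Nat.two_pow_pos h⟩) ≤ (max (2 * α) β + 1 : ℕ) from
    wdist_le_natCast_add hstart (rgadget_wdist_row_le x y α β r k k.isLt)
  by_cases hr : r.val < 2 * s
  · have hj : r.val / 2 < s := by omega
    have hhead := rgadget_wdist_le_of_adj0 x y α β
      (u := .ah (decide (r.val % 2 = 1)) ⟨_, hj⟩) (v := .p r ⟨0, Nat.two_pow_pos h⟩)
      ⟨by by_cases h2 : r.val % 2 = 1 <;> simp [h2] <;> omega, rfl⟩
    exact (wdist_le_natCast_add (rgadget_wdist_a_ah_le x y α β i _ _) hhead).trans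
      (Nat.cast_le.mpr (by show 2 * α + 1 ≤ _; omega))
  · have hj : r.val - 2 * s < ℓ := by omega
    have hhead := rgadget_wdist_le_of_adj0 x y α β (u := .as ⟨_, hj⟩)
      (v := .p r ⟨0, Nat.two_pow_pos h⟩) ⟨by simp only; omega, rfl⟩
    have hstar := rgadget_wdist_le_of_adj0 (h := h) x y α β (u := .a i) (v := .as ⟨_, hj⟩) trivial
    exact (wdist_le_natCast_add hstar hhead).trans
      (Nat.cast_le.mpr (by show (if x i _ then α else β) + 1 ≤ _; split <;> omega))

lemma rgadget_wdist_a_b_le (i : Fin (2 ^ s)) (j : Fin ℓ) (hx : x i j = true)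
    (hy : y i j = true) (i' : Fin (2 ^ s)) : δ (.a i) (.b i') ≤ (α + (2 ^ h + 1) + α : ℕ) := by
  by_cases hi : i = i'
  · -- the common `1` of `x` and `y` opens the route through the row of `a*_j` and `b*_j`
    subst hi
    have hstart := rgadget_wdist_le_of_adj0 (h := h) x y α β (u := .a i) (v := .as j) trivial
    have hend := rgadget_wdist_le_of_adj0' (h := h) x y α β (u := .b i) (v := .bs j) trivial
    simp only [rgadgetW, hx, hy, if_true] at hstart hend
    exact wdist_le_natCast_add (wdist_le_natCast_add hstart
      (rgadget_wdist_as_bs_le x y α β j)) hend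
  · -- otherwise `i` and `i'` differ in some bit, whose row joins `a^z` to `b^(!z)`
    obtain ⟨k, hk, hbit⟩ := Nat.exists_testBit_ne_of_lt_two_pow i.isLt i'.isLt
      (Fin.val_injective.ne hi)
    have hstart := rgadget_wdist_le_of_adj0 (h := h) x y α β (u := .a i)
      (v := .ah (i.val.testBit k) ⟨k, hk⟩) rfl
    have hend := rgadget_wdist_le_of_adj0' (h := h) x y α β (u := .b i')
      (v := .bh (!i.val.testBit k) ⟨k, hk⟩) (by
        show (!i.val.testBit k) = i'.val.testBit k
        revert hbit; cases i.val.testBit k <;> cases i'.val.testBit k <;> simp)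
    exact wdist_le_natCast_add (wdist_le_natCast_add hstart
      (rgadget_wdist_ah_bh_le x y α β _ _)) hend

lemma rgadget_wdist_a_le (i : Fin (2 ^ s)) (j : Fin ℓ) (hx : x i j = true)
    (hy : y i j = true) (v : RV h s ℓ) :
    δ (.a i) v ≤ (max (2 * α) β + (2 ^ (h + 1) - 1 + 2 ^ h) : ℕ) := by
  have hpow : 2 ^ (h + 1) = 2 * 2 ^ h := pow_succ' 2 h
  have hpos := Nat.two_pow_pos h
  have hstar (j' : Fin ℓ) : δ (.a i) (.as j') ≤ (if x i j' then α else β : ℕ) :=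
    rgadget_wdist_le_of_adj0 x y α β (u := .a i) (v := .as j') trivial
  cases v with
  | t m =>
    refine (wdist_le_natCast_add (hstar j) (rgadget_wdist_as_t_le x y α β j m)).trans
      (Nat.cast_le.mpr ?_)
    have := m.isLt
    simp only [hx, if_true]
    omega
  | p r k =>
    exact (rgadget_wdist_a_p_le x y α β i r k).trans (Nat.cast_le.mpr (by omega))
  | a0 =>
    exact (rgadget_wdist_le_of_adj0' x y α β (u := .a0) (v := .a i) trivial).trans
      (Nat.cast_le.mpr (by show 2 * α ≤ _; omega))
  | a i' =>
    obtain rfl | hi := eq_or_ne i i'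
    · simp
    · exact (rgadget_wdist_le_of_adj0 x y α β (u := .a i) (v := .a i') hi).trans
        (Nat.cast_le.mpr (by show α ≤ _; omega))
  | b i' =>
    exact (rgadget_wdist_a_b_le x y α β i j hx hy i').trans (Nat.cast_le.mpr (by omega))
  | ah z k =>
    exact (rgadget_wdist_a_ah_le x y α β i z k).trans (Nat.cast_le.mpr (by omega))
  | bh z k =>
    have hroute := wdist_le_natCast_add (rgadget_wdist_a_ah_le (h := h) x y α β i (!z) k)
      (rgadget_wdist_ah_bh_le x y α β (!z) k)
    rw [Bool.not_not] at hroute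
    exact hroute.trans (Nat.cast_le.mpr (by omega))
  | as k =>
    exact (hstar k).trans (Nat.cast_le.mpr (by split <;> omega))
  | bs k =>
    exact (wdist_le_natCast_add (hstar k) (rgadget_wdist_as_bs_le x y α β k)).trans
      (Nat.cast_le.mpr (by split <;> omega))

def IsRGadgetLipschitz (g : RV h s ℓ → ℕ) : Prop :=
  ∀ a b, rgadgetAdj0 a b → g b ≤ g a + rgadgetW x y α β a b ∧ g a ≤ g b + rgadgetW x y α β a b

variable {x y α β} in
lemma IsRGadgetLipschitz.le_add_wdist {g : RV h s ℓ → ℕ} (hg : IsRGadgetLipschitz x y α β g)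
    (u v : RV h s ℓ) : (g v : ℝ≥0∞) ≤ g u + δ u v := by
  refine le_add_wdist_of_lipschitz (fun v => (g v : ℝ≥0∞)) ?_ u v
  rintro a b ⟨-, hab | hab⟩
  · exact_mod_cast (hg a b hab).1
  · rw [rgadgetWeight, rgadgetW_comm]
    exact_mod_cast (hg b a hab).2

def a0Potential (α : ℕ) : RV h s ℓ → ℕ
  | .a0 => 3 * α
  | .a _ => α
  | _ => 0

lemma isRGadgetLipschitz_a0Potential (hαβ : α ≤ β) :
    IsRGadgetLipschitz x y α β (a0Potential (h := h) α) := by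
  intro a b hab
  cases a <;> cases b <;> simp only [rgadgetAdj0] at hab <;>
    simp only [a0Potential, rgadgetW] <;> (try split_ifs) <;> omega

/- Lower bounds for the distances from `a_i`: a row costs `α` if `a_i` is adjacent to its `a`-end
and `m ≤ min β (2α)` otherwise, and its `b`-end carries the same value. Unless `x i j = y i j = 1`
for some `j`, `b_i` is reached only through `b`-ends of rows of cost `m` along `α`-edges, or
through `b`-ends of rows of cost `α` along `β`-edges. -/
def aRowPotential (y : Fin (2 ^ s) → Fin ℓ → Bool) (α m : ℕ) (i : Fin (2 ^ s))
    (r : Fin (2 * s + ℓ)) : ℕ :=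
  if hr : r.val < 2 * s then (if i.val.testBit (r.val / 2) = decide (r.val % 2 = 1) then α else m)
  else if y i ⟨r.val - 2 * s, by omega⟩ then m else α

def aPotential (y : Fin (2 ^ s) → Fin ℓ → Bool) (α m : ℕ) (i : Fin (2 ^ s)) : RV h s ℓ → ℕ
  | .t _ => 2 * α
  | .p r _ => aRowPotential y α m i r
  | .a0 => 2 * α
  | .a i' => if i' = i then 0 else α
  | .b i' => if i' = i then α + m else m
  | .ah z j => if z = i.val.testBit j.val then α else m
  | .bh z j => if z = i.val.testBit j.val then m else α
  | .as j => if y i j then m else α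
  | .bs j => if y i j then m else α

section RowPotential

variable {y α} {m : ℕ} {i : Fin (2 ^ s)} {r : Fin (2 * s + ℓ)}

lemma aRowPotential_mem_Icc (hαm : α ≤ m) (hm : m ≤ 2 * α) :
    α ≤ aRowPotential y α m i r ∧ aRowPotential y α m i r ≤ 2 * α := by
  unfold aRowPotential
  split_ifs <;> omega

lemma aRowPotential_of_ah {z : Bool} {j : Fin s} (hr : r.val = 2 * j.val + if z then 1 else 0) :
    aRowPotential y α m i r = if z = i.val.testBit j.val then α else m := by
  have hrow : r.val < 2 * s := by have := j.isLt; split at hr <;> omega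
  have hbit : r.val / 2 = j.val := by split at hr <;> omega
  have hpar : decide (r.val % 2 = 1) = z := by cases z <;> simp at hr ⊢ <;> omega
  rw [aRowPotential, dif_pos hrow, hbit, hpar]
  exact if_congr eq_comm rfl rfl

lemma aRowPotential_of_bh {z : Bool} {j : Fin s} (hr : r.val = 2 * j.val + if z then 0 else 1) :
    aRowPotential y α m i r = if z = i.val.testBit j.val then m else α := by
  rw [aRowPotential_of_ah (z := !z) (by cases z <;> simpa using hr)]
  cases z <;> cases i.val.testBit j.val <;> rfl

lemma aRowPotential_of_as {j : Fin ℓ} (hr : r.val = 2 * s + j.val) :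
    aRowPotential y α m i r = if y i j then m else α := by
  have hj : (⟨r.val - 2 * s, by omega⟩ : Fin ℓ) = j := Fin.ext (by simp only; omega)
  rw [aRowPotential, dif_neg (by omega), hj]

end RowPotential

lemma isRGadgetLipschitz_aPotential {m : ℕ} {i : Fin (2 ^ s)} (hαm : α ≤ m) (hm : m ≤ 2 * α)
    (hmβ : m ≤ β) (hF : ∀ j, ¬(x i j = true ∧ y i j = true)) :
    IsRGadgetLipschitz x y α β (aPotential (h := h) y α m i) := by
  intro a b hab
  cases a <;> cases b <;> simp only [rgadgetAdj0] at hab <;> simp only [aPotential, rgadgetW]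
  case t.p r _ => have := aRowPotential_mem_Icc (y := y) (i := i) (r := r) hαm hm; omega
  case p.p => obtain ⟨rfl, -⟩ := hab; omega
  case ah.p => rw [aRowPotential_of_ah hab.1]; omega
  case bh.p => rw [aRowPotential_of_bh hab.1]; omega
  case as.p => rw [aRowPotential_of_as hab.1]; omega
  case bs.p => rw [aRowPotential_of_as hab.1]; omega
  all_goals first | omega | (split_ifs <;> simp_all <;> omega)

lemma min_le_rgadget_wecc (hαβ : α ≤ β) (hF : ∀ i j, ¬(x i j = true ∧ y i j = true))
    (u : RV h s ℓ) :
    ((min (α + β) (3 * α) : ℕ) : ℝ≥0∞) ≤ wecc (rgadget h s ℓ) (rgadgetWeight x y α β) u := by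
  suffices ∃ v, ((min (α + β) (3 * α) : ℕ) : ℝ≥0∞) ≤ δ u v by
    obtain ⟨v, hv⟩ := this
    exact hv.trans (wdist_le_wecc u v)
  have h3α : ((min (α + β) (3 * α) : ℕ) : ℝ≥0∞) ≤ (3 * α : ℕ) := Nat.cast_le.mpr (min_le_right _ _)
  have hfar := (isRGadgetLipschitz_a0Potential (h := h) x y α β hαβ).le_add_wdist
  have hfar_a0 (hu : a0Potential α u = 0) : ∃ v, ((min (α + β) (3 * α) : ℕ) : ℝ≥0∞) ≤ δ u v :=
    ⟨.a0, h3α.trans (by simpa [hu] using hfar u .a0 : ((a0Potential α .a0 : ℕ) : ℝ≥0∞) ≤ _)⟩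
  cases u
  case a i =>
    have hb := (isRGadgetLipschitz_aPotential (h := h) x y α β (m := min β (2 * α))
      (by omega) (by omega) (by omega) (hF i)).le_add_wdist (.a i) (.b i)
    have hmin : min (α + β) (3 * α) = α + min β (2 * α) := by omega
    refine ⟨.b i, ?_⟩
    simpa [aPotential, hmin] using hb
  case a0 =>
    refine ⟨.b ⟨0, Nat.two_pow_pos s⟩, h3α.trans ?_⟩
    rw [rgadget_wdist_comm]
    simpa [a0Potential] using hfar (.b _) .a0
  all_goals exact hfar_a0 rfl

end Gadget

theorem stmt4_general (h s ℓ : ℕ)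
    (α β : ℕ) (hαβ : α < β)
    (x y : Fin (2 ^ s) → Fin ℓ → Bool)
    (n : ℕ) (hn : n = Fintype.card (RV h s ℓ)) :
    ((∃ (i : Fin (2 ^ s)) (j : Fin ℓ), x i j = true ∧ y i j = true) →
      wrad (rgadget h s ℓ) (fun u v => ((rgadgetW x y α β u v : ℕ) : ℝ≥0∞)) ≤
        ((max (2 * α) β : ℕ) : ℝ≥0∞) + (n : ℝ≥0∞)) ∧
    ((¬ ∃ (i : Fin (2 ^ s)) (j : Fin ℓ), x i j = true ∧ y i j = true) →
      ((min (α + β) (3 * α) : ℕ) : ℝ≥0∞) ≤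
        wrad (rgadget h s ℓ) (fun u v => ((rgadgetW x y α β u v : ℕ) : ℝ≥0∞))) := by
  constructor
  · rintro ⟨i, j, hx, hy⟩
    have hcard := RV.two_pow_succ_sub_one_add_two_pow_le_card (h := h) (s := s) (ℓ := ℓ)
      ⟨2 * s + j, by have := j.isLt; omega⟩
    refine wrad_le_of_forall_wdist_le (.a i) fun v =>
      (rgadget_wdist_a_le x y α β i j hx hy v).trans ?_
    rw [hn]
    exact_mod_cast Nat.add_le_add_left hcard _
  · intro hF
    exact le_iInf (min_le_rgadget_wecc x y α β hαβ.le fun i j hij => hF ⟨i, j, hij⟩)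

/-- For the radius gadget `(G,w)`: if `F'(x,y)=1` then
`R_{G,w} ≤ max{2α, β} + n`, and if `F'(x,y)=0` then `R_{G,w} ≥ min{α+β, 3α}`,
where `n = |V|` and `F'(x,y) = ⋁_{i,j} (x_{i,j} ∧ y_{i,j})`. -/
theorem stmt4 (h s ℓ : ℕ) (hh : 1 ≤ h) (hs : 1 ≤ s) (hℓ : 1 ≤ ℓ)
    (α β : ℕ) (hα : 0 < α) (hαβ : α < β)
    (x y : Fin (2 ^ s) → Fin ℓ → Bool)
    (n : ℕ) (hn : n = Fintype.card (RV h s ℓ)) :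
    ((∃ (i : Fin (2 ^ s)) (j : Fin ℓ), x i j = true ∧ y i j = true) →
      wrad (rgadget h s ℓ) (fun u v => ((rgadgetW x y α β u v : ℕ) : ℝ≥0∞)) ≤
        ((max (2 * α) β : ℕ) : ℝ≥0∞) + (n : ℝ≥0∞)) ∧
    ((¬ ∃ (i : Fin (2 ^ s)) (j : Fin ℓ), x i j = true ∧ y i j = true) →
      ((min (α + β) (3 * α) : ℕ) : ℝ≥0∞) ≤
        wrad (rgadget h s ℓ) (fun u v => ((rgadgetW x y α β u v : ℕ) : ℝ≥0∞))) :=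
  stmt4_general h s ℓ α β hαβ x y n hn
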